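/- For a hyperfield F and n ≥ 1, the subgroup 2Kₙ(F) equals the set of finite sums Σⱼ ρ(a_{j1})...ρ(a_{jn}) such that for each j some entry a_{jk} is a square b² with b ∈ Ḟ. -/

import Mathlib

/-- A multiring structure (multivalued addition) on a carrier `R`. -/
structure MulRingOps (R : Type*) where
  add : R → R → Set R
  mul : R → R → R
  neg : R → R
  zero : R
  one : R

namespace MulRingOps

variable {R : Type*}

/-- The multiring axioms. -/
structure IsMulRing (S : MulRingOps R) : Prop where
  add_nonempty : ∀ a b, (S.add a b).Nonempty
  add_comm : ∀ a b, S.add a b = S.add b a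
  rev_left : ∀ {x y z}, z ∈ S.add x y → x ∈ S.add z (S.neg y)
  rev_right : ∀ {x y z}, z ∈ S.add x y → y ∈ S.add (S.neg x) z
  zero_add : ∀ x y, y ∈ S.add S.zero x ↔ x = y
  add_assoc : ∀ x y z : R,
    (⋃ w ∈ S.add y z, S.add x w) = (⋃ t ∈ S.add x y, S.add t z)
  mul_comm : ∀ a b, S.mul a b = S.mul b a
  mul_assoc : ∀ a b c, S.mul (S.mul a b) c = S.mul a (S.mul b c)
  one_mul : ∀ a, S.mul S.one a = a
  mul_zero : ∀ a, S.mul a S.zero = S.zero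
  distrib : ∀ {a b c : R} (d : R), c ∈ S.add a b →
    S.mul c d ∈ S.add (S.mul a d) (S.mul b d)

/-- A hyperfield: a multiring with `0 ≠ 1` in which every nonzero element is invertible. -/
structure IsHyperfield (S : MulRingOps R) extends IsMulRing S : Prop where
  zero_ne_one : S.zero ≠ S.one
  exists_inv : ∀ a, a ≠ S.zero → ∃ b, S.mul a b = S.one

/-- A hyperfield is hyperbolic when `1 - 1` is everything. -/
def IsHyperbolic (S : MulRingOps R) : Prop :=
  S.add S.one (S.neg S.one) = Set.univ

/-- Morphisms of multirings. -/
def IsHom {A B : Type*} (S : MulRingOps A) (T : MulRingOps B) (f : A → B) : Prop :=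
  (∀ {a b c}, c ∈ S.add a b → f c ∈ T.add (f a) (f b)) ∧
  (∀ a, f (S.neg a) = T.neg (f a)) ∧
  f S.zero = T.zero ∧
  (∀ a b, f (S.mul a b) = T.mul (f a) (f b)) ∧
  f S.one = T.one

end MulRingOps

namespace MulRingOps

variable {F : Type*}

open FreeAbelianGroup in
/-- The subgroup of relations defining `KₙF`: tuples with a zero entry are degenerate,
multilinearity in each slot, and the Steinberg-type relations `ρ(a)⊗ρ(b)` with `b ∈ 1-a`. -/
def krel (S : MulRingOps F) (n : ℕ) : AddSubgroup (FreeAbelianGroup (Fin n → F)) :=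
  AddSubgroup.closure
    ({x | ∃ v : Fin n → F, (∃ i, v i = S.zero) ∧ x = of v} ∪
     {x | ∃ (v : Fin n → F) (i : Fin n) (b c : F), b ≠ S.zero ∧ c ≠ S.zero ∧
        x = of (Function.update v i (S.mul b c)) - of (Function.update v i b) -
            of (Function.update v i c)} ∪
     {x | ∃ v : Fin n → F, (∀ j, v j ≠ S.zero) ∧
        (∃ i j : Fin n, i ≠ j ∧ v i ∈ S.add S.one (S.neg (v j))) ∧ x = of v})

/-- `KₙF`: the n-th K-theory group of the hyperfield `F`, presented as the n-fold tensor
power of `K₁F = Ḟ` (written additively) modulo the Steinberg-type relations. -/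
abbrev KGroup (S : MulRingOps F) (n : ℕ) :=
  FreeAbelianGroup (Fin n → F) ⧸ krel S n

/-- The generator `ρ(v 0)⋯ρ(v (n-1))` of `KₙF`. -/
def kgen (S : MulRingOps F) (n : ℕ) (v : Fin n → F) : KGroup S n :=
  QuotientAddGroup.mk (FreeAbelianGroup.of v)

end MulRingOps

/-- The subgroup `2G` of an additive commutative group. -/
def twoSub (G : Type*) [AddCommGroup G] : AddSubgroup G :=
  AddSubgroup.closure {x : G | ∃ y : G, x = y + y}

/-
Multilinearity in the `k`-th slot gives `ρ(a₁)⋯ρ(b²)⋯ρ(aₙ) = 2 ρ(a₁)⋯ρ(b)⋯ρ(aₙ)`, so every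
generator with a square entry lies in `2Kₙ(F)`. Conversely, taking `k = 1` and `b = a₁`, twice a
generator with nonzero entries is a generator with a square entry, while generators with a zero
entry vanish; since the generators span `Kₙ(F)` and doubling is additive, such generators span
`2Kₙ(F)`.
-/

theorem twoSub_le_of_closure_eq_top {G : Type*} [AddCommGroup G] {s : Set G}
    (hs : AddSubgroup.closure s = ⊤) {H : AddSubgroup G} (hH : ∀ y ∈ s, y + y ∈ H) :
    twoSub G ≤ H := by
  refine (AddSubgroup.closure_le _).mpr ?_
  rintro _ ⟨y, rfl⟩
  have hy : y ∈ AddSubgroup.closure s := hs ▸ AddSubgroup.mem_top y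
  induction hy using AddSubgroup.closure_induction with
  | mem y hy => exact hH y hy
  | zero => simp
  | add a b _ _ ha hb => rw [add_add_add_comm]; exact H.add_mem ha hb
  | neg a _ ha => rw [← neg_add]; exact H.neg_mem ha

namespace MulRingOps

variable {F : Type*} {S : MulRingOps F}

theorem IsHyperfield.mul_ne_zero (h : S.IsHyperfield) {a b : F} (ha : a ≠ S.zero)
    (hb : b ≠ S.zero) : S.mul a b ≠ S.zero := by
  intro hab
  obtain ⟨a', ha'⟩ := h.exists_inv a ha
  obtain ⟨b', hb'⟩ := h.exists_inv b hb
  have hinv : S.mul (S.mul a b) (S.mul a' b') = S.one := by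
    rw [h.mul_assoc, ← h.mul_assoc b a' b', h.mul_comm b a', h.mul_assoc a' b b',
      hb', h.mul_comm a' S.one, h.one_mul, ha']
  rw [hab, h.mul_comm, h.mul_zero] at hinv
  exact h.zero_ne_one hinv

variable {n : ℕ}

theorem closure_range_kgen : AddSubgroup.closure (Set.range (kgen S n)) = ⊤ := by
  rw [eq_top_iff]
  rintro x -
  induction x using QuotientAddGroup.induction_on with
  | H z =>
    induction z using FreeAbelianGroup.induction_on with
    | zero => exact zero_mem _
    | of v => exact AddSubgroup.subset_closure ⟨v, rfl⟩
    | neg v hv => simpa using neg_mem hv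
    | add a b ha hb => simpa using add_mem ha hb

theorem kgen_eq_zero {v : Fin n → F} (hv : ∃ i, v i = S.zero) : kgen S n v = 0 :=
  (QuotientAddGroup.eq_zero_iff _).mpr <|
    AddSubgroup.subset_closure (Or.inl (Or.inl ⟨v, hv, rfl⟩))

theorem kgen_update_mul (v : Fin n → F) (i : Fin n) {b c : F} (hb : b ≠ S.zero)
    (hc : c ≠ S.zero) :
    kgen S n (Function.update v i (S.mul b c)) =
      kgen S n (Function.update v i b) + kgen S n (Function.update v i c) := by
  have hrel : FreeAbelianGroup.of (Function.update v i (S.mul b c)) -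
      FreeAbelianGroup.of (Function.update v i b) -
      FreeAbelianGroup.of (Function.update v i c) ∈ krel S n :=
    AddSubgroup.subset_closure (Or.inl (Or.inr ⟨v, i, b, c, hb, hc, rfl⟩))
  rwa [← QuotientAddGroup.eq_zero_iff, QuotientAddGroup.mk_sub, QuotientAddGroup.mk_sub, sub_sub,
    sub_eq_zero] at hrel

variable (S n) in
def squareEntryGens : Set (KGroup S n) :=
  {x | ∃ v : Fin n → F, (∀ i, v i ≠ S.zero) ∧
    (∃ (k : Fin n) (b : F), b ≠ S.zero ∧ v k = S.mul b b) ∧ x = kgen S n v}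

theorem squareEntryGens_subset_twoSub : squareEntryGens S n ⊆ twoSub (KGroup S n) := by
  rintro _ ⟨v, -, ⟨k, b, hb, hvk⟩, rfl⟩
  have hv : v = Function.update v k (S.mul b b) := by rw [← hvk, Function.update_eq_self]
  rw [hv, kgen_update_mul v k hb hb]
  exact AddSubgroup.subset_closure ⟨_, rfl⟩

theorem kgen_add_self_mem (h : S.IsHyperfield) (hn : 1 ≤ n) (v : Fin n → F) :
    kgen S n v + kgen S n v ∈ AddSubgroup.closure (squareEntryGens S n) := by
  by_cases hzero : ∃ i, v i = S.zero
  · rw [kgen_eq_zero hzero, add_zero]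
    exact zero_mem _
  push Not at hzero
  let i : Fin n := ⟨0, hn⟩
  have hsq := kgen_update_mul (S := S) v i (hzero i) (hzero i)
  rw [Function.update_eq_self] at hsq
  refine hsq ▸ AddSubgroup.subset_closure ⟨_, ?_, ⟨i, v i, hzero i, by simp⟩, rfl⟩
  intro j
  rcases eq_or_ne j i with rfl | hji
  · simpa using h.mul_ne_zero (hzero i) (hzero i)
  · simpa [hji] using hzero j

end MulRingOps

open MulRingOps in
/-- for a hyperfield `F` and `n ≥ 1`, `2Kₙ(F)` is exactly the subgroup of
finite sums of generators `ρ(a₁)⋯ρ(aₙ)` for which some entry `aₖ` is a nonzero square. -/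
theorem two_Kn_eq_square_entries {F : Type*} (S : MulRingOps F) (h : S.IsHyperfield)
    (n : ℕ) (hn : 1 ≤ n) :
    twoSub (KGroup S n) =
      AddSubgroup.closure {x : KGroup S n | ∃ v : Fin n → F,
        (∀ i, v i ≠ S.zero) ∧
        (∃ (k : Fin n) (b : F), b ≠ S.zero ∧ v k = S.mul b b) ∧
        x = kgen S n v} :=
  le_antisymm
    (twoSub_le_of_closure_eq_top closure_range_kgen fun _ ⟨v, hv⟩ =>
      hv ▸ kgen_add_self_mem h hn v)
    ((AddSubgroup.closure_le _).mpr squareEntryGens_subset_twoSub)
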